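/- arXiv:2305.10849 — 4 statements merged into one kernel-verified Lean document; each statement's English description precedes it below -/
import Mathlib

section
/- For any real a and any s > 0, the integral over x in [0, ∞) of e^{a x} · h(s, x) dx, where h(s,x) = (|x|/√(2π s³)) e^{-x²/(2s)}, equals 1/√(2π s) + a · e^{a² s / 2} · 𝒩(a√s), where 𝒩 is the standard normal CDF. (This is ψ(a, s, 0) with k = 0.) -/
open Real MeasureTheory Filter Topology Asymptotics

noncomputable def stdN (z : ℝ) : ℝ := ∫ t in Set.Iic z, (1 / Real.sqrt (2 * π)) * Real.exp (-t ^ 2 / 2)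

lemma shift_Ioi (f : ℝ → ℝ) (c d : ℝ) :
    ∫ x in Set.Ioi c, f (x + d) = ∫ x in Set.Ioi (c + d), f x := by
  have A : MeasurableEmbedding fun x : ℝ => x + d :=
    (Homeomorph.addRight d).isClosedEmbedding.measurableEmbedding
  have h := A.setIntegral_map (μ := volume) f (Set.Ioi (c + d))
  rw [map_add_right_eq_self (volume : Measure ℝ)] at h
  rw [h]
  congr 1
  rw [Set.preimage_add_const_Ioi]
  norm_num

lemma Fexp (a s : ℝ) (hs : 0 < s) (x : ℝ) :
    Real.exp (a * x - x ^ 2 / (2 * s))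
      = Real.exp (a ^ 2 * s / 2) * Real.exp (-(2 * s)⁻¹ * (x - a * s) ^ 2) := by
  rw [← Real.exp_add]
  congr 1
  field_simp
  ring

lemma hF_int (a s : ℝ) (hs : 0 < s) :
    Integrable (fun x : ℝ => Real.exp (a * x - x ^ 2 / (2 * s))) := by
  have hb : (0 : ℝ) < (2 * s)⁻¹ := by positivity
  have h := ((integrable_exp_neg_mul_sq hb).comp_sub_right (a * s)).const_mul
    (Real.exp (a ^ 2 * s / 2))
  apply h.congr
  filter_upwards with x
  rw [Fexp a s hs x]

lemma hxF_int (a s : ℝ) (hs : 0 < s) :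
    Integrable (fun x : ℝ => x * Real.exp (a * x - x ^ 2 / (2 * s))) := by
  have hb : (0 : ℝ) < (2 * s)⁻¹ := by positivity
  have h1 := (integrable_mul_exp_neg_mul_sq hb).comp_sub_right (a * s)
  have h2 := (integrable_exp_neg_mul_sq hb).comp_sub_right (a * s)
  have h := ((h1.add (h2.const_mul (a * s))).const_mul (Real.exp (a ^ 2 * s / 2)))
  apply h.congr
  filter_upwards with x
  simp only [Pi.add_apply]
  rw [Fexp a s hs x]
  ring

lemma hderiv (a s : ℝ) (hs : 0 < s) (x : ℝ) :
    HasDerivAt (fun x => Real.exp (a * x - x ^ 2 / (2 * s)))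
      ((a - x / s) * Real.exp (a * x - x ^ 2 / (2 * s))) x := by
  have h1 : HasDerivAt (fun x : ℝ => a * x - x ^ 2 / (2 * s)) (a - x / s) x := by
    have ha : HasDerivAt (fun x : ℝ => a * x) a x := by
      simpa using (hasDerivAt_id x).const_mul a
    have hb2 : HasDerivAt (fun x : ℝ => x ^ 2 / (2 * s)) (x / s) x := by
      have := (hasDerivAt_pow 2 x).div_const (2 * s)
      refine this.congr_deriv ?_
      field_simp
      ring
    exact ha.sub hb2
  simpa [mul_comm] using h1.exp

lemma htend (a s : ℝ) (hs : 0 < s) :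
    Tendsto (fun x => Real.exp (a * x - x ^ 2 / (2 * s))) atTop (𝓝 0) := by
  apply Real.tendsto_exp_atBot.comp
  have heq : (fun x : ℝ => a * x - x ^ 2 / (2 * s)) = fun x => x * (a - x / (2 * s)) := by
    funext x; field_simp
  rw [heq]
  apply Tendsto.atTop_mul_atBot₀ tendsto_id
  have h1 : Tendsto (fun x : ℝ => x / (2 * s)) atTop atTop :=
    tendsto_id.atTop_div_const (by positivity)
  have h2 : Tendsto (fun x : ℝ => -(x / (2 * s))) atTop atBot :=
    tendsto_neg_atTop_atBot.comp h1
  have := tendsto_atBot_add_const_left atTop a h2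
  simpa [sub_eq_add_neg] using this

lemma hFTC (a s : ℝ) (hs : 0 < s) :
    ∫ x in Set.Ioi (0 : ℝ), (a - x / s) * Real.exp (a * x - x ^ 2 / (2 * s)) = -1 := by
  have hint : IntegrableOn (fun x : ℝ => (a - x / s) * Real.exp (a * x - x ^ 2 / (2 * s)))
      (Set.Ioi (0 : ℝ)) := by
    have h := ((hF_int a s hs).const_mul a).sub ((hxF_int a s hs).const_mul s⁻¹)
    have heq : (fun x : ℝ => (a - x / s) * Real.exp (a * x - x ^ 2 / (2 * s)))
        = fun x => a * Real.exp (a * x - x ^ 2 / (2 * s))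
          - s⁻¹ * (x * Real.exp (a * x - x ^ 2 / (2 * s))) := by
      funext x; field_simp
    rw [heq]
    exact h.integrableOn
  have := integral_Ioi_of_hasDerivAt_of_tendsto'
    (f := fun x => Real.exp (a * x - x ^ 2 / (2 * s)))
    (f' := fun x => (a - x / s) * Real.exp (a * x - x ^ 2 / (2 * s)))
    (fun x _ => hderiv a s hs x) hint (htend a s hs)
  simpa using this

lemma gauss_int (a s : ℝ) (hs : 0 < s) :
    ∫ x in Set.Ioi (0 : ℝ), Real.exp (a * x - x ^ 2 / (2 * s))
      = Real.sqrt s * Real.exp (a ^ 2 * s / 2)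
        * ∫ t in Set.Iic (a * Real.sqrt s), Real.exp (-t ^ 2 / 2) := by
  have hb : (0 : ℝ) < (2 * s)⁻¹ := by positivity
  have hss : Real.sqrt s * Real.sqrt s = s := Real.mul_self_sqrt hs.le
  have hsq : (0 : ℝ) < Real.sqrt s := Real.sqrt_pos.mpr hs
  calc ∫ x in Set.Ioi (0 : ℝ), Real.exp (a * x - x ^ 2 / (2 * s))
      = ∫ x in Set.Ioi (0 : ℝ),
          Real.exp (a ^ 2 * s / 2) * Real.exp (-(2 * s)⁻¹ * (x + -(a * s)) ^ 2) := by
        refine setIntegral_congr_fun measurableSet_Ioi fun x _ => ?_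
        rw [show x + -(a * s) = x - a * s by ring]
        exact Fexp a s hs x
    _ = Real.exp (a ^ 2 * s / 2) * ∫ x in Set.Ioi (0 : ℝ),
          Real.exp (-(2 * s)⁻¹ * (x + -(a * s)) ^ 2) := by
        rw [MeasureTheory.integral_const_mul]
    _ = Real.exp (a ^ 2 * s / 2) * ∫ x in Set.Ioi (-(a * s)),
          Real.exp (-(2 * s)⁻¹ * x ^ 2) := by
        rw [shift_Ioi (fun y => Real.exp (-(2 * s)⁻¹ * y ^ 2)) 0 (-(a * s)), zero_add]
    _ = Real.exp (a ^ 2 * s / 2) * (Real.sqrt s *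
          ∫ t in Set.Iic (a * Real.sqrt s), Real.exp (-t ^ 2 / 2)) := by
        congr 1
        have hc := integral_comp_mul_left_Ioi
          (fun y => Real.exp (-(2 * s)⁻¹ * y ^ 2)) (-(a * Real.sqrt s)) hsq
        have harg : Real.sqrt s * -(a * Real.sqrt s) = -(a * s) := by
          rw [show Real.sqrt s * -(a * Real.sqrt s) = -(a * (Real.sqrt s * Real.sqrt s)) by ring, hss]
        rw [harg] at hc
        have hgauss : ∀ x : ℝ, Real.exp (-(2 * s)⁻¹ * (Real.sqrt s * x) ^ 2)
            = Real.exp (-x ^ 2 / 2) := by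
          intro x
          congr 1
          rw [mul_pow, show Real.sqrt s ^ 2 = Real.sqrt s * Real.sqrt s by ring, hss]
          field_simp
        simp only [hgauss] at hc
        have hrefl : ∫ x in Set.Ioi (-(a * Real.sqrt s)), Real.exp (-x ^ 2 / 2)
            = ∫ t in Set.Iic (a * Real.sqrt s), Real.exp (-t ^ 2 / 2) := by
          rw [← integral_comp_neg_Iic]
          simp only [neg_sq]
        have hkey : ∫ x in Set.Ioi (-(a * s)), Real.exp (-(2 * s)⁻¹ * x ^ 2)
            = Real.sqrt s * ∫ x in Set.Ioi (-(a * Real.sqrt s)), Real.exp (-x ^ 2 / 2) := by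
          rw [hc, smul_eq_mul, ← mul_assoc, mul_inv_cancel₀ hsq.ne', one_mul]
        rw [hkey, hrefl]
    _ = Real.sqrt s * Real.exp (a ^ 2 * s / 2)
        * ∫ t in Set.Iic (a * Real.sqrt s), Real.exp (-t ^ 2 / 2) := by ring

lemma hDF_int (a s : ℝ) (hs : 0 < s) :
    Integrable (fun x : ℝ => (a - x / s) * Real.exp (a * x - x ^ 2 / (2 * s))) := by
  have h := ((hF_int a s hs).const_mul a).sub ((hxF_int a s hs).const_mul s⁻¹)
  have heq : (fun x : ℝ => (a - x / s) * Real.exp (a * x - x ^ 2 / (2 * s)))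
      = fun x => a * Real.exp (a * x - x ^ 2 / (2 * s))
        - s⁻¹ * (x * Real.exp (a * x - x ^ 2 / (2 * s))) := by
    funext x; field_simp
  rw [heq]
  exact h

theorem stmt0 (a s : ℝ) (hs : 0 < s) :
    (∫ x in Set.Ioi (0 : ℝ),
        Real.exp (a * x) * (|x| / Real.sqrt (2 * π * s ^ 3) * Real.exp (-x ^ 2 / (2 * s))))
      = 1 / Real.sqrt (2 * π * s) + a * Real.exp (a ^ 2 * s / 2) * stdN (a * Real.sqrt s) := by
  have hstep1 : (∫ x in Set.Ioi (0 : ℝ),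
        Real.exp (a * x) * (|x| / Real.sqrt (2 * π * s ^ 3) * Real.exp (-x ^ 2 / (2 * s))))
      = ∫ x in Set.Ioi (0 : ℝ), (Real.sqrt (2 * π * s ^ 3))⁻¹
          * (x * Real.exp (a * x - x ^ 2 / (2 * s))) := by
    refine setIntegral_congr_fun measurableSet_Ioi fun x hx => ?_
    rw [abs_of_pos hx,
      show a * x - x ^ 2 / (2 * s) = a * x + -x ^ 2 / (2 * s) by ring, Real.exp_add]
    ring
  have hsplit : ∫ x in Set.Ioi (0 : ℝ), x * Real.exp (a * x - x ^ 2 / (2 * s))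
      = s * a * (∫ x in Set.Ioi (0 : ℝ), Real.exp (a * x - x ^ 2 / (2 * s)))
        - s * ∫ x in Set.Ioi (0 : ℝ), (a - x / s) * Real.exp (a * x - x ^ 2 / (2 * s)) := by
    rw [← MeasureTheory.integral_const_mul, ← MeasureTheory.integral_const_mul,
      ← MeasureTheory.integral_sub ((hF_int a s hs).const_mul _).integrableOn
        ((hDF_int a s hs).const_mul _).integrableOn]
    refine setIntegral_congr_fun measurableSet_Ioi fun x _ => ?_
    field_simp
    ring
  have hstd : stdN (a * Real.sqrt s)
      = 1 / Real.sqrt (2 * π) * ∫ t in Set.Iic (a * Real.sqrt s), Real.exp (-t ^ 2 / 2) := by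
    rw [stdN, MeasureTheory.integral_const_mul]
  rw [hstep1, MeasureTheory.integral_const_mul, hsplit, hFTC a s hs, gauss_int a s hs, hstd]
  have h2 : Real.sqrt (2 * π * s) = Real.sqrt (2 * π) * Real.sqrt s :=
    Real.sqrt_mul (by positivity) s
  have h1 : Real.sqrt (2 * π * s ^ 3) = Real.sqrt (2 * π) * Real.sqrt s * s := by
    rw [show 2 * π * s ^ 3 = 2 * π * s * s ^ 2 by ring, Real.sqrt_mul (by positivity),
      Real.sqrt_sq hs.le, h2]
  rw [h1, h2]
  have hπ : (0 : ℝ) < Real.sqrt (2 * π) := Real.sqrt_pos.mpr (by positivity)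
  have hsq : (0 : ℝ) < Real.sqrt s := Real.sqrt_pos.mpr hs
  field_simp
  ring
end

section
/- For k ≥ 0, real a, and s > 0, the integral ∫_k^∞ e^{a x} · (x/√(2π s³)) e^{−x²/(2s)} dx equals (1/√(2π s)) e^{a k − k²/(2s)} + a · e^{a² s/2} · 𝒩((a s − k)/√s). -/
open Real MeasureTheory Filter Topology Asymptotics

lemma gauss_int_s2 : Integrable (fun t : ℝ => (1 / Real.sqrt (2 * π)) * Real.exp (-t ^ 2 / 2)) := by
  have : Integrable (fun t : ℝ => Real.exp (-(1/2 : ℝ) * t ^ 2)) :=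
    integrable_exp_neg_mul_sq (by norm_num)
  have h := this.const_mul (1 / Real.sqrt (2 * π))
  convert h using 2 with t
  ring_nf

lemma gauss_total : (∫ t : ℝ, (1 / Real.sqrt (2 * π)) * Real.exp (-t ^ 2 / 2)) = 1 := by
  rw [integral_const_mul]
  have : (∫ t : ℝ, Real.exp (-t ^ 2 / 2)) = Real.sqrt (2 * π) := by
    have h := integral_gaussian (1/2 : ℝ)
    simp only [neg_mul] at h
    rw [show (∫ t : ℝ, Real.exp (-t ^ 2 / 2)) = ∫ t : ℝ, Real.exp (-((1:ℝ)/2 * t ^ 2)) by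
      congr 1; funext t; ring_nf, h]
    rw [show π / (1/2 : ℝ) = 2 * π by ring]
  rw [this, one_div, inv_mul_cancel₀ (by positivity)]

lemma stdN_tendsto : Tendsto stdN atTop (𝓝 1) := by
  have h := tendsto_setIntegral_of_monotone (μ := volume) (f := fun t : ℝ => (1 / Real.sqrt (2 * π)) * Real.exp (-t ^ 2 / 2))
    (s := fun z : ℝ => Set.Iic z) (fun z => measurableSet_Iic)
    (fun x y hxy => Set.Iic_subset_Iic.mpr hxy) (by rw [Set.iUnion_Iic]; exact gauss_int_s2.integrableOn)
  rw [Set.iUnion_Iic, Measure.restrict_univ, gauss_total] at h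
  exact h

lemma stdN_deriv (x : ℝ) : HasDerivAt stdN ((1 / Real.sqrt (2 * π)) * Real.exp (-x ^ 2 / 2)) x := by
  set g : ℝ → ℝ := fun t => (1 / Real.sqrt (2 * π)) * Real.exp (-t ^ 2 / 2) with hg
  have heq : ∀ z : ℝ, stdN z = stdN 0 + ∫ t in (0:ℝ)..z, g t := by
    intro z
    rw [← intervalIntegral.integral_Iic_sub_Iic gauss_int_s2.integrableOn gauss_int_s2.integrableOn]
    simp [stdN]
  have hc : Continuous g := by
    exact continuous_const.mul (Real.continuous_exp.comp (((continuous_pow 2).neg).div_const 2))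
  have hd : HasDerivAt (fun z => stdN 0 + ∫ t in (0:ℝ)..z, g t) (g x) x :=
    (intervalIntegral.integral_hasDerivAt_right
      (gauss_int_s2.intervalIntegrable)
      hc.aestronglyMeasurable.stronglyMeasurableAtFilter
      hc.continuousAt).const_add _
  exact hd.congr_of_eventuallyEq (Eventually.of_forall heq)

lemma stdN_neg (z : ℝ) : stdN (-z) = 1 - stdN z := by
  set g : ℝ → ℝ := fun t => (1 / Real.sqrt (2 * π)) * Real.exp (-t ^ 2 / 2) with hg
  have h1 : stdN (-z) = ∫ t in Set.Ioi z, g t := by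
    rw [show stdN (-z) = ∫ t in Set.Iic (-z), g (-t) by
      simp only [stdN, hg]; congr 1; funext t; simp [neg_sq]]
    rw [integral_comp_neg_Iic, neg_neg]
  have h2 := intervalIntegral.integral_Iic_add_Ioi (b := z) gauss_int_s2.integrableOn gauss_int_s2.integrableOn
  rw [gauss_total] at h2
  have h3 : stdN z + stdN (-z) = 1 := by rw [h1]; exact h2
  linarith

theorem stmt2 (k a s : ℝ) (hk : 0 ≤ k) (hs : 0 < s) :
    (∫ x in Set.Ioi k,
        Real.exp (a * x) * (x / Real.sqrt (2 * π * s ^ 3) * Real.exp (-x ^ 2 / (2 * s))))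
      = 1 / Real.sqrt (2 * π * s) * Real.exp (a * k - k ^ 2 / (2 * s))
        + a * Real.exp (a ^ 2 * s / 2) * stdN ((a * s - k) / Real.sqrt s) := by
  have h2s : (0:ℝ) < 2 * s := by linarith
  have hss : Real.sqrt s ≠ 0 := ne_of_gt (Real.sqrt_pos.mpr hs)
  have hsp : Real.sqrt (2 * π * s) ≠ 0 := ne_of_gt (Real.sqrt_pos.mpr (by positivity))
  set E : ℝ := Real.exp (a ^ 2 * s / 2) with hE
  set c : ℝ := 1 / Real.sqrt (2 * π * s) with hc
  set F : ℝ → ℝ := fun x => -(c * Real.exp (a * x - x ^ 2 / (2 * s)))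
      + a * E * stdN ((x - a * s) / Real.sqrt s) with hF
  have key : ∀ x : ℝ, E * Real.exp (-((x - a*s)/Real.sqrt s)^2 / 2)
      = Real.exp (a*x - x^2/(2*s)) := by
    intro x
    rw [hE, ← Real.exp_add]
    congr 1
    rw [div_pow, Real.sq_sqrt hs.le]
    field_simp
    ring
  have key2 : ∀ x : ℝ, E * Real.exp (-(1/(2*s)) * (x - a*s)^2)
      = Real.exp (a*x) * Real.exp (-x^2/(2*s)) := by
    intro x
    rw [hE, ← Real.exp_add, ← Real.exp_add]
    congr 1
    field_simp
    ring
  have hsqrt3 : Real.sqrt (2*π*s^3) = s * Real.sqrt (2*π*s) := by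
    rw [show 2*π*s^3 = s^2 * (2*π*s) by ring, Real.sqrt_mul (sq_nonneg s), Real.sqrt_sq hs.le]
  have hsplit : Real.sqrt (2*π*s) = Real.sqrt (2*π) * Real.sqrt s :=
    Real.sqrt_mul (by positivity) s
  -- derivative
  have hderiv : ∀ x ∈ Set.Ici k, HasDerivAt F
      (Real.exp (a*x) * (x / Real.sqrt (2*π*s^3) * Real.exp (-x^2/(2*s)))) x := by
    intro x _
    have d1 : HasDerivAt (fun x : ℝ => a*x - x^2/(2*s)) (a - x/s) x := by
      have h := ((hasDerivAt_id x).const_mul a).sub ((hasDerivAt_pow 2 x).div_const (2*s))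
      refine h.congr_deriv ?_
      field_simp
      ring
    have d2 : HasDerivAt (fun x => Real.exp (a*x - x^2/(2*s)))
        ((a - x/s) * Real.exp (a*x - x^2/(2*s))) x := by
      have h := d1.exp
      convert h using 1
      ring
    have d3 : HasDerivAt (fun x : ℝ => (x - a*s)/Real.sqrt s) (1/Real.sqrt s) x := by
      have h := ((hasDerivAt_id x).sub_const (a*s)).div_const (Real.sqrt s)
      exact h
    have d4 : HasDerivAt (fun x => stdN ((x - a*s)/Real.sqrt s))
        ((1 / Real.sqrt (2*π)) * Real.exp (-((x - a*s)/Real.sqrt s)^2/2) * (1/Real.sqrt s)) x :=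
      HasDerivAt.comp x (stdN_deriv _) d3
    have dF := ((d2.const_mul c).neg).add (d4.const_mul (a*E))
    have hval : Real.exp (a*x) * (x / Real.sqrt (2*π*s^3) * Real.exp (-x^2/(2*s)))
        = -(c * ((a - x/s) * Real.exp (a*x - x^2/(2*s))))
          + a * E * ((1 / Real.sqrt (2*π)) * Real.exp (-((x - a*s)/Real.sqrt s)^2/2)
              * (1/Real.sqrt s)) := by
      have h2 : a * E * ((1 / Real.sqrt (2*π)) * Real.exp (-((x - a*s)/Real.sqrt s)^2/2)
              * (1/Real.sqrt s))
          = a * c * Real.exp (a*x - x^2/(2*s)) := by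
        rw [hc, hsplit]
        rw [show a * E * ((1 / Real.sqrt (2*π)) * Real.exp (-((x - a*s)/Real.sqrt s)^2/2)
              * (1/Real.sqrt s))
            = a * (1 / Real.sqrt (2*π)) * (1/Real.sqrt s)
              * (E * Real.exp (-((x - a*s)/Real.sqrt s)^2/2)) by ring, key x]
        have hsq2 : Real.sqrt (2*π) ≠ 0 := ne_of_gt (Real.sqrt_pos.mpr (by positivity))
        field_simp
      rw [h2, hsqrt3]
      have hX : Real.exp (a*x) * Real.exp (-x^2/(2*s)) = Real.exp (a*x - x^2/(2*s)) := by
        rw [← Real.exp_add]; ring_nf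
      rw [show Real.exp (a*x) * (x / (s * Real.sqrt (2*π*s)) * Real.exp (-x^2/(2*s)))
          = x / (s * Real.sqrt (2*π*s)) * (Real.exp (a*x) * Real.exp (-x^2/(2*s))) by ring, hX,
        hc]
      field_simp
      ring
    rw [hF]
    rw [hval]
    exact dF
  -- integrability
  have hint : IntegrableOn
      (fun x => Real.exp (a*x) * (x / Real.sqrt (2*π*s^3) * Real.exp (-x^2/(2*s))))
      (Set.Ioi k) := by
    have hb : (0:ℝ) < 1/(2*s) := by positivity
    have h1 := integrable_mul_exp_neg_mul_sq hb
    have h2 := (integrable_exp_neg_mul_sq hb).const_mul (a*s)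
    have h3 := ((h1.add h2).const_mul (E / Real.sqrt (2*π*s^3))).comp_sub_right (a*s)
    refine (h3.congr ?_).integrableOn
    refine Eventually.of_forall fun x => ?_
    simp only
    calc E / Real.sqrt (2*π*s^3) * ((x - a*s) * Real.exp (-(1/(2*s)) * (x-a*s)^2)
          + a*s * Real.exp (-(1/(2*s)) * (x-a*s)^2))
        = x / Real.sqrt (2*π*s^3) * (E * Real.exp (-(1/(2*s)) * (x-a*s)^2)) := by ring
      _ = x / Real.sqrt (2*π*s^3) * (Real.exp (a*x) * Real.exp (-x^2/(2*s))) := by rw [key2 x]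
      _ = Real.exp (a*x) * (x / Real.sqrt (2*π*s^3) * Real.exp (-x^2/(2*s))) := by ring
  -- limit at infinity
  have harg : Tendsto (fun x : ℝ => (x - a*s)/Real.sqrt s) atTop atTop := by
    apply Tendsto.atTop_div_const (Real.sqrt_pos.mpr hs)
    simpa [sub_eq_add_neg] using tendsto_atTop_add_const_right atTop (-(a*s)) tendsto_id
  have hexp : Tendsto (fun x : ℝ => a*x - x^2/(2*s)) atTop atBot := by
    have h1 : Tendsto (fun x : ℝ => x * (x/(2*s) - a)) atTop atTop := by
      apply Tendsto.atTop_mul_atTop₀ tendsto_id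
      simpa [sub_eq_add_neg] using tendsto_atTop_add_const_right atTop (-a)
        (tendsto_id.atTop_div_const h2s)
    have h2 := tendsto_neg_atTop_atBot.comp h1
    refine h2.congr fun x => ?_
    simp only [Function.comp_apply]
    ring
  have htop : Tendsto F atTop (𝓝 (a * E)) := by
    have p1 : Tendsto (fun x : ℝ => -(c * Real.exp (a*x - x^2/(2*s)))) atTop (𝓝 0) := by
      have := ((Real.tendsto_exp_atBot.comp hexp).const_mul c).neg
      simpa using this
    have p2 : Tendsto (fun x : ℝ => a * E * stdN ((x - a*s)/Real.sqrt s)) atTop (𝓝 (a*E*1)) :=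
      (stdN_tendsto.comp harg).const_mul (a*E)
    have := p1.add p2
    rw [zero_add, mul_one] at this
    exact this
  rw [MeasureTheory.integral_Ioi_of_hasDerivAt_of_tendsto' hderiv hint htop]
  rw [show (a*s - k)/Real.sqrt s = -((k - a*s)/Real.sqrt s) by rw [← neg_div, neg_sub],
    stdN_neg]
  simp only [hF, hc]
  ring
end

section
/- For k < 0, real a, and s > 0, the integral ∫_{−∞}^k e^{a x} · (−x/√(2π s³)) e^{−x²/(2s)} dx equals (1/√(2π s)) e^{a k − k²/(2s)} − a · e^{a² s/2} · 𝒩((k − a s)/√s). -/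
open Real MeasureTheory Filter Topology Asymptotics

lemma subst_lemma (σ c k : ℝ) (hσ : 0 < σ) (g : ℝ → ℝ) :
    (∫ x in Set.Iic k, g x) = σ * ∫ t in Set.Iic ((k - c) / σ), g (σ * t + c) := by
  have himg : (fun t : ℝ => σ * t + c) '' Set.Iic ((k - c) / σ) = Set.Iic k := by
    ext x
    simp only [Set.mem_image, Set.mem_Iic]
    constructor
    · rintro ⟨t, ht, rfl⟩
      have : σ * t ≤ σ * ((k - c) / σ) := mul_le_mul_of_nonneg_left ht hσ.le
      rw [mul_div_cancel₀ _ hσ.ne'] at this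
      linarith
    · intro hx
      refine ⟨(x - c) / σ, by gcongr, ?_⟩
      field_simp
      ring
  have hderiv : ∀ x ∈ Set.Iic ((k - c) / σ),
      HasDerivWithinAt (fun t : ℝ => σ * t + c) σ (Set.Iic ((k - c) / σ)) x := by
    intro x _
    simpa using (((hasDerivAt_id x).const_mul σ).add_const c).hasDerivWithinAt
  have hinj : Set.InjOn (fun t : ℝ => σ * t + c) (Set.Iic ((k - c) / σ)) := by
    intro x _ y _ h
    simp only at h
    have : σ * x = σ * y := by linarith
    exact mul_left_cancel₀ hσ.ne' this
  rw [← himg, integral_image_eq_integral_abs_deriv_smul measurableSet_Iic hderiv hinj g]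
  simp only [abs_of_pos hσ, smul_eq_mul]
  rw [integral_const_mul]

lemma gauss_int_s3 {b : ℝ} (hb : 0 < b) (c : ℝ) :
    Integrable (fun x : ℝ => Real.exp (-b * (x - c) ^ 2)) :=
  (integrable_exp_neg_mul_sq hb).comp_sub_right c

lemma gauss_int' {b : ℝ} (hb : 0 < b) (c : ℝ) :
    Integrable (fun x : ℝ => x * Real.exp (-b * (x - c) ^ 2)) := by
  have h0 : Integrable (fun y : ℝ => y * Real.exp (-b * y ^ 2)) := by
    have := integrable_rpow_mul_exp_neg_mul_sq hb (s := 1) (by norm_num)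
    simpa using this
  have h2 := (h0.add ((integrable_exp_neg_mul_sq hb).const_mul c)).comp_sub_right c
  refine h2.congr (Filter.Eventually.of_forall fun x => ?_)
  simp only [Pi.add_apply]
  ring

theorem stmt3 (k a s : ℝ) (hk : k < 0) (hs : 0 < s) :
    (∫ x in Set.Iic k,
        Real.exp (a * x) * (-x / Real.sqrt (2 * π * s ^ 3) * Real.exp (-x ^ 2 / (2 * s))))
      = 1 / Real.sqrt (2 * π * s) * Real.exp (a * k - k ^ 2 / (2 * s))
        - a * Real.exp (a ^ 2 * s / 2) * stdN ((k - a * s) / Real.sqrt s) := by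
  have hb : (0 : ℝ) < 1 / (2 * s) := by positivity
  set c : ℝ := a * s with hc
  have key : ∀ x : ℝ, a * x - x ^ 2 / (2 * s) = a ^ 2 * s / 2 + -(1 / (2 * s)) * (x - c) ^ 2 := by
    intro x; rw [hc]; field_simp; ring
  set F : ℝ → ℝ := fun x => Real.exp (a * x - x ^ 2 / (2 * s)) with hF
  have hFeq : ∀ x : ℝ, F x = Real.exp (a ^ 2 * s / 2) * Real.exp (-(1 / (2 * s)) * (x - c) ^ 2) := by
    intro x; rw [hF]; simp only; rw [key x, Real.exp_add]
  have hFderiv : ∀ x : ℝ, HasDerivAt F ((a - x / s) * F x) x := by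
    intro x
    have h1 : HasDerivAt (fun x : ℝ => a * x - x ^ 2 / (2 * s)) (a - x / s) x := by
      have := ((hasDerivAt_id x).const_mul a).sub ((hasDerivAt_pow 2 x).div_const (2 * s))
      refine this.congr_deriv ?_
      norm_num
      ring
    have h2 := h1.exp
    rw [hF]
    convert h2 using 1
    exact mul_comm _ _
  have hintF : Integrable F := by
    refine ((gauss_int_s3 hb c).const_mul (Real.exp (a ^ 2 * s / 2))).congr
      (Filter.Eventually.of_forall fun x => ?_)
    simp only [hFeq]
  have hintxF : Integrable (fun x => x * F x) := by
    refine ((gauss_int' hb c).const_mul (Real.exp (a ^ 2 * s / 2))).congr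
      (Filter.Eventually.of_forall fun x => ?_)
    simp only [hFeq]; ring
  have hintF' : Integrable (fun x => (a - x / s) * F x) := by
    refine ((hintF.const_mul a).sub (hintxF.div_const s)).congr
      (Filter.Eventually.of_forall fun x => ?_)
    simp only [Pi.sub_apply]
    ring
  have hTend : Tendsto F atBot (𝓝 0) := by
    have h1 : Tendsto (fun x : ℝ => -(x - c)) atBot atTop := by
      have := tendsto_neg_atBot_atTop.comp (tendsto_atBot_add_const_right atBot (-c) tendsto_id)
      simpa [sub_eq_add_neg, Function.comp_def] using this
    have h2 : Tendsto (fun x : ℝ => (x - c) ^ 2) atBot atTop := by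
      have := (tendsto_pow_atTop (n := 2) two_ne_zero).comp h1
      simpa only [Function.comp_def, neg_sq] using this
    have h3 : Tendsto (fun x : ℝ => -(1 / (2 * s)) * (x - c) ^ 2) atBot atBot :=
      Tendsto.const_mul_atTop_of_neg (neg_lt_zero.mpr hb) h2
    have h4 : Tendsto (fun x : ℝ => Real.exp (-(1 / (2 * s)) * (x - c) ^ 2)) atBot (𝓝 0) :=
      Real.tendsto_exp_atBot.comp h3
    have h5 := h4.const_mul (Real.exp (a ^ 2 * s / 2))
    rw [mul_zero] at h5
    exact h5.congr fun x => (hFeq x).symm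
  have hFTC : ∫ x in Set.Iic k, (a - x / s) * F x = F k := by
    have := integral_Iic_of_hasDerivAt_of_tendsto' (a := k)
      (fun x _ => hFderiv x) hintF'.integrableOn hTend
    rw [this, sub_zero]
  have hσ : (0 : ℝ) < Real.sqrt s := Real.sqrt_pos.mpr hs
  have hσsq : Real.sqrt s ^ 2 = s := Real.sq_sqrt hs.le
  have h2π : Real.sqrt (2 * π) ≠ 0 := by positivity
  have hsub : (∫ x in Set.Iic k, Real.exp (-(1 / (2 * s)) * (x - c) ^ 2))
      = Real.sqrt s * Real.sqrt (2 * π) * stdN ((k - c) / Real.sqrt s) := by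
    rw [subst_lemma (Real.sqrt s) c k hσ]
    have heq : ∀ t : ℝ, Real.exp (-(1 / (2 * s)) * (Real.sqrt s * t + c - c) ^ 2)
        = Real.exp (-t ^ 2 / 2) := by
      intro t
      congr 1
      rw [add_sub_cancel_right, mul_pow, hσsq]
      field_simp
    simp_rw [heq]
    have hstd : stdN ((k - c) / Real.sqrt s)
        = 1 / Real.sqrt (2 * π) * ∫ t in Set.Iic ((k - c) / Real.sqrt s), Real.exp (-t ^ 2 / 2) := by
      rw [stdN, integral_const_mul]
    rw [hstd]
    field_simp
  have hIF : ∫ x in Set.Iic k, F x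
      = Real.exp (a ^ 2 * s / 2) * (Real.sqrt s * Real.sqrt (2 * π) * stdN ((k - c) / Real.sqrt s)) := by
    calc ∫ x in Set.Iic k, F x
        = ∫ x in Set.Iic k, Real.exp (a ^ 2 * s / 2) * Real.exp (-(1 / (2 * s)) * (x - c) ^ 2) := by
          simp_rw [hFeq]
      _ = _ := by rw [integral_const_mul, hsub]
  have hsqrt3 : Real.sqrt (2 * π * s ^ 3) = Real.sqrt (2 * π * s) * s := by
    have : 2 * π * s ^ 3 = (2 * π * s) * s ^ 2 := by ring
    rw [this, Real.sqrt_mul (by positivity), Real.sqrt_sq hs.le]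
  have hint_eq : ∀ x : ℝ, Real.exp (a * x) * (-x / Real.sqrt (2 * π * s ^ 3) * Real.exp (-x ^ 2 / (2 * s)))
      = 1 / Real.sqrt (2 * π * s) * ((a - x / s) * F x - a * F x) := by
    intro x
    have hs2π : Real.sqrt (2 * π * s) ≠ 0 := by positivity
    rw [hsqrt3, hF]
    simp only
    have hx : (a - x / s) * rexp (a * x - x ^ 2 / (2 * s)) - a * rexp (a * x - x ^ 2 / (2 * s))
        = -x / s * rexp (a * x - x ^ 2 / (2 * s)) := by ring
    rw [hx, show a * x - x ^ 2 / (2 * s) = a * x + -x ^ 2 / (2 * s) by ring, Real.exp_add]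
    field_simp
  calc ∫ x in Set.Iic k,
        Real.exp (a * x) * (-x / Real.sqrt (2 * π * s ^ 3) * Real.exp (-x ^ 2 / (2 * s)))
      = ∫ x in Set.Iic k, 1 / Real.sqrt (2 * π * s) * ((a - x / s) * F x - a * F x) := by
        simp_rw [hint_eq]
    _ = 1 / Real.sqrt (2 * π * s) * ∫ x in Set.Iic k, ((a - x / s) * F x - a * F x) := by
        rw [integral_const_mul]
    _ = 1 / Real.sqrt (2 * π * s) * (F k - a * ∫ x in Set.Iic k, F x) := by
        rw [integral_sub hintF'.integrableOn ((hintF.const_mul a).integrableOn), hFTC,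
          integral_const_mul]
    _ = 1 / Real.sqrt (2 * π * s) * Real.exp (a * k - k ^ 2 / (2 * s))
        - a * Real.exp (a ^ 2 * s / 2) * stdN ((k - a * s) / Real.sqrt s) := by
        rw [hIF, ← hc]
        have hprod : Real.sqrt (2 * π * s) = Real.sqrt (2 * π) * Real.sqrt s :=
          Real.sqrt_mul (by positivity) s
        rw [hF]
        simp only
        rw [hprod]
        field_simp
end

section
/- For p, q > 0 with p + q = 1 and u, v > 0, the integral over ℓ in [0, ∞) of h(v, ℓp) · h(u, ℓq) dℓ equals p q / (2 √(2π) (p² u + q² v)^{3/2}), where h(s, y) = (|y|/√(2π s³)) e^{−y²/(2s)}. -/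
open Real MeasureTheory Filter Topology Asymptotics

noncomputable def hdens (s y : ℝ) : ℝ := |y| / Real.sqrt (2 * π * s ^ 3) * Real.exp (-y ^ 2 / (2 * s))

lemma h32 (x : ℝ) (hx : 0 < x) : x ^ ((3:ℝ)/2) = x * Real.sqrt x := by
  rw [show (3:ℝ)/2 = 1 + 1/2 by norm_num, Real.rpow_add hx, Real.rpow_one, Real.sqrt_eq_rpow]

theorem stmt4 (p q u v : ℝ) (hp : 0 < p) (hq : 0 < q) (hpq : p + q = 1)
    (hu : 0 < u) (hv : 0 < v) :
    (∫ ℓ in Set.Ioi (0 : ℝ), hdens v (ℓ * p) * hdens u (ℓ * q))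
      = p * q / (2 * Real.sqrt (2 * π) * (p ^ 2 * u + q ^ 2 * v) ^ ((3 : ℝ) / 2)) := by
  have hπ : 0 < π := Real.pi_pos
  set A := p ^ 2 * u + q ^ 2 * v with hAdef
  have hA0 : 0 < A := by positivity
  have hb : 0 < A / (2 * u * v) := by positivity
  have h1 : (∫ ℓ in Set.Ioi (0:ℝ), hdens v (ℓ*p) * hdens u (ℓ*q))
      = ∫ ℓ in Set.Ioi (0:ℝ), (p * q / (Real.sqrt (2*π*v^3) * Real.sqrt (2*π*u^3))) *
          (ℓ ^ ((2:ℝ)) * Real.exp (-(A/(2*u*v)) * ℓ ^ ((2:ℝ)))) := by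
    refine setIntegral_congr_fun measurableSet_Ioi (fun ℓ hℓ => ?_)
    have hℓ0 : (0:ℝ) < ℓ := hℓ
    simp only [hdens]
    have hexp : Real.exp (-(ℓ*p)^2/(2*v)) * Real.exp (-(ℓ*q)^2/(2*u))
        = Real.exp (-(A/(2*u*v)) * ℓ^2) := by
      rw [← Real.exp_add]
      congr 1
      rw [hAdef]
      field_simp
      ring
    have hS1 : Real.sqrt (2*π*v^3) ≠ 0 := by positivity
    have hS2 : Real.sqrt (2*π*u^3) ≠ 0 := by positivity
    rw [Real.rpow_two, abs_of_pos (by positivity), abs_of_pos (by positivity),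
      mul_mul_mul_comm, hexp]
    field_simp
  rw [h1, MeasureTheory.integral_const_mul,
    integral_rpow_mul_exp_neg_mul_rpow two_pos (by norm_num) hb]
  have hG : Real.Gamma (((2:ℝ)+1)/2) = Real.sqrt π / 2 := by
    rw [show ((2:ℝ)+1)/2 = 1/2 + 1 by norm_num, Real.Gamma_add_one (by norm_num),
      Real.Gamma_one_half_eq]
    ring
  rw [hG, show (-((2:ℝ)+1)/2) = -((3:ℝ)/2) by norm_num, Real.rpow_neg hb.le,
    h32 _ hb, h32 _ hA0]
  -- now pure sqrt algebra
  have e1 : Real.sqrt (2*π*v^3) = Real.sqrt (2*π) * (v * Real.sqrt v) := by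
    rw [show 2*π*v^3 = (2*π)*(v^2*v) by ring, Real.sqrt_mul (by positivity : (0:ℝ) ≤ 2*π),
      Real.sqrt_mul (sq_nonneg v), Real.sqrt_sq hv.le]
  have e2 : Real.sqrt (2*π*u^3) = Real.sqrt (2*π) * (u * Real.sqrt u) := by
    rw [show 2*π*u^3 = (2*π)*(u^2*u) by ring, Real.sqrt_mul (by positivity : (0:ℝ) ≤ 2*π),
      Real.sqrt_mul (sq_nonneg u), Real.sqrt_sq hu.le]
  have e3 : Real.sqrt (A/(2*u*v)) = Real.sqrt A / (Real.sqrt 2 * Real.sqrt u * Real.sqrt v) := by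
    rw [Real.sqrt_div hA0.le, Real.sqrt_mul (by positivity : (0:ℝ) ≤ 2*u),
      Real.sqrt_mul (by positivity : (0:ℝ) ≤ 2)]
  have e4 : Real.sqrt (2*π) = Real.sqrt 2 * Real.sqrt π := Real.sqrt_mul (by norm_num) π
  rw [e1, e2, e3, e4]
  set a := Real.sqrt 2 with ha0
  set b := Real.sqrt π with hb0
  set c := Real.sqrt u with hc0
  set d := Real.sqrt v with hd0
  set e := Real.sqrt A with he0
  have ha : 0 < a := Real.sqrt_pos.mpr two_pos
  have hbp : 0 < b := Real.sqrt_pos.mpr hπ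
  have hcp : 0 < c := Real.sqrt_pos.mpr hu
  have hdp : 0 < d := Real.sqrt_pos.mpr hv
  have hep : 0 < e := Real.sqrt_pos.mpr hA0
  rw [show (2:ℝ) = a*a from (Real.mul_self_sqrt (by norm_num)).symm,
    show u = c*c from (Real.mul_self_sqrt hu.le).symm,
    show v = d*d from (Real.mul_self_sqrt hv.le).symm,
    show A = e*e from (Real.mul_self_sqrt hA0.le).symm]
  field_simp
end
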